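/- G(z) = 1 - (e^{-z} - e^{-2z})/z has no zeros z with Re(z) ≥ 0 except z = 0. -/

import Mathlib

/-!
A zero `z ≠ 0` of `G` is a fixed point `e^{-z} - e^{-2z} = z`, which the bound
`‖e^{-z} - e^{-2z}‖ < ‖z‖` on the closed right half-plane rules out. For `Re z > 0` the bound
comes from `e^{-z} - e^{-2z} = ∫_1^2 z e^{-zt} dt` with `|e^{-zt}| ≤ e^{-Re z} < 1`; on the
imaginary axis `z = iy` it is `|1 - e^{-iy}| = 2 |sin (y/2)| < |y|`.
-/

open Complex

/-- `G(z) = 1 - (e^{-z} - e^{-2z})/z` for `z ≠ 0`, with `G(0) = 0`. -/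
noncomputable def G (z : ℂ) : ℂ :=
  if z = 0 then 0 else 1 - (Complex.exp (-z) - Complex.exp (-2 * z)) / z

namespace Complex

theorem norm_exp_I_mul_ofReal_sub_one_lt {x : ℝ} (hx : x ≠ 0) :
    ‖exp (I * x) - 1‖ < ‖x‖ := by
  have := Real.abs_sin_lt_abs (div_ne_zero hx two_ne_zero)
  rw [abs_div, abs_two] at this
  simp only [norm_exp_I_mul_ofReal_sub_one, norm_mul, Real.norm_eq_abs, abs_two]
  linarith

theorem norm_exp_neg_mul_sub_exp_neg_mul_le {z : ℂ} (hre : 0 ≤ z.re) {a b : ℝ} (hab : a ≤ b) :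
    ‖exp (-(a * z)) - exp (-(b * z))‖ ≤ ‖z‖ * Real.exp (-(a * z.re)) * (b - a) := by
  have hderiv : ∀ t ∈ Set.uIcc a b,
      HasDerivAt (fun t : ℝ => -exp (-(t * z))) (z * exp (-(t * z))) t := by
    intro t _
    convert ((hasDerivAt_mul_const z).fun_neg.cexp.fun_neg).comp_ofReal (z := t) using 1
    ring
  have hbound : ∀ t ∈ Set.uIoc a b, ‖z * exp (-(t * z))‖ ≤ ‖z‖ * Real.exp (-(a * z.re)) := by
    intro t ht
    rw [Set.uIoc_of_le hab] at ht
    rw [norm_mul, norm_exp]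
    gcongr
    simp only [neg_re, mul_re, ofReal_re, ofReal_im, zero_mul, sub_zero, neg_le_neg_iff]
    exact mul_le_mul_of_nonneg_right ht.1.le hre
  have := intervalIntegral.norm_integral_le_of_norm_le_const hbound
  rwa [intervalIntegral.integral_eq_sub_of_hasDerivAt hderiv
    (Continuous.intervalIntegrable (by fun_prop) a b), abs_of_nonneg (sub_nonneg.2 hab),
    neg_sub_neg] at this

theorem norm_exp_neg_sub_exp_neg_two_mul_lt {z : ℂ} (hz : z ≠ 0) (hre : 0 ≤ z.re) :
    ‖exp (-z) - exp (-2 * z)‖ < ‖z‖ := by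
  rcases hre.lt_or_eq with hpos | hzero
  · calc ‖exp (-z) - exp (-2 * z)‖ = ‖exp (-((1 : ℝ) * z)) - exp (-((2 : ℝ) * z))‖ := by
          push_cast; ring_nf
      _ ≤ ‖z‖ * Real.exp (-((1 : ℝ) * z.re)) * (2 - 1) :=
          norm_exp_neg_mul_sub_exp_neg_mul_le hre (by norm_num)
      _ < ‖z‖ := by
          rw [one_mul, show (2 : ℝ) - 1 = 1 by norm_num, mul_one]
          exact mul_lt_of_lt_one_right (norm_pos_iff.2 hz) (Real.exp_lt_one_iff.2 (by linarith))
  · have hy : -z.im ≠ 0 := neg_ne_zero.2 fun h => hz (Complex.ext hzero.symm h)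
    have hrot : -z = I * (-z.im : ℝ) := by
      apply Complex.ext <;> simp [← hzero]
    have hnorm : ‖z‖ = ‖-z.im‖ := by
      simp [norm_eq_sqrt_sq_add_sq, ← hzero, Real.sqrt_sq_eq_abs]
    calc ‖exp (-z) - exp (-2 * z)‖ = ‖exp (-z)‖ * ‖exp (I * (-z.im : ℝ)) - 1‖ := by
          rw [← hrot, ← norm_mul, ← norm_neg, show -2 * z = -z + -z by ring, exp_add]
          ring_nf
      _ < ‖z‖ := by
          rw [norm_exp, neg_re, ← hzero, neg_zero, Real.exp_zero, one_mul, hnorm]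
          exact norm_exp_I_mul_ofReal_sub_one_lt hy

end Complex

/-- `G` has no zeros with `Re z ≥ 0` except `z = 0`. -/
theorem no_zeros_right (z : ℂ) (hG : G z = 0) (hre : 0 ≤ z.re) : z = 0 := by
  by_contra hz
  have hfix : exp (-z) - exp (-2 * z) = z := by
    rwa [G, if_neg hz, sub_eq_zero, eq_comm, div_eq_one_iff_eq hz] at hG
  exact (norm_exp_neg_sub_exp_neg_two_mul_lt hz hre).ne (congrArg norm hfix)
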